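/- Suppose F and the constraints G_s are L-Lipschitz with respect to a metric d on the policy space, the parametrization is ε-universal (for every feasible r there exists θ ∈ Θ with d(Φ(θ), r) ≤ ε), and there exists a strictly feasible r₀ with G_s(r₀) ≤ −Lε − δ for some δ > 0 whose ε-approximation remains feasible. Then P_θ ≥ P' − Lε, where P' is the optimal value of the perturbed primal with constraints G_s(r) ≤ −Lε. -/
import Mathlib


/-- With `L`-Lipschitz objective and constraints and an `ε`-universal parametrization,
the parametrized optimal value is within `Lε` of the perturbed primal optimum. -/
theorem near_universal_loss {C Θ : Type*} [MetricSpace C] {S : ℕ}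
    (F : C → ℝ) (G : C → Fin S → ℝ) (Φ : Θ → C)
    (L ε δ : ℝ) (hL : 0 ≤ L) (hε : 0 ≤ ε) (hδ : 0 < δ)
    (hF : ∀ x y : C, |F x - F y| ≤ L * dist x y)
    (hG : ∀ (s : Fin S) (x y : C), |G x s - G y s| ≤ L * dist x y)
    (huniv : ∀ r : C, (∀ s, G r s ≤ 0) → ∃ θ : Θ, dist (Φ θ) r ≤ ε)
    (r0 : C) (hstrict : ∀ s, G r0 s ≤ -(L * ε) - δ)
    (P' Pθ : ℝ)
    (hP' : IsLUB {y : ℝ | ∃ r : C, (∀ s, G r s ≤ -(L * ε)) ∧ y = F r} P')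
    (hPθ : IsLUB {y : ℝ | ∃ θ : Θ, (∀ s, G (Φ θ) s ≤ 0) ∧ y = F (Φ θ)} Pθ) :
    P' - L * ε ≤ Pθ := by
  rw [sub_le_iff_le_add]
  apply hP'.2
  rintro y ⟨r, hr, rfl⟩
  have hfeas : ∀ s, G r s ≤ 0 := fun s =>
    (hr s).trans (by nlinarith)
  obtain ⟨θ, hθ⟩ := huniv r hfeas
  have hLd : L * dist (Φ θ) r ≤ L * ε := mul_le_mul_of_nonneg_left hθ hL
  have hGθ : ∀ s, G (Φ θ) s ≤ 0 := by
    intro s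
    have := abs_le.1 (hG s (Φ θ) r)
    linarith [this.2, hr s]
  have hFθ : F (Φ θ) ≤ Pθ := hPθ.1 ⟨θ, hGθ, rfl⟩
  have := abs_le.1 (hF r (Φ θ))
  rw [dist_comm] at this
  linarith [this.2]
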